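/- Let A be the cylinder obtained from the rectangle R = [0, E] × (0, 1) ⊂ ℂ (E > 0) by identifying the vertical sides, with flat metric |dz|. Let φ = (α + iβ)² dz² be a quadratic differential on A with α, β real-valued and ∫₀¹ ∫₀^E (α² + β²) dx dy ≤ E₀, and suppose ∫₀^E |α(x + iy)| dx ≥ E₀ for every y ∈ (0, 1). Then ∫₀¹ ∫₀^E (α² − β²) dx dy ≥ 2E₀²/E − E₀. -/

import Mathlib

/-!
By Cauchy–Schwarz on each horizontal segment, `E₀ ≤ ∫ |α|` forces `E₀² / E ≤ ∫ α² dx` for almost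
every height `y`, hence `E₀² / E ≤ ∫∫ α²`. Writing `∫∫ (α² - β²) = 2 ∫∫ α² - ∫∫ (α² + β²)` and using
`∫∫ (α² + β²) ≤ E₀` gives the bound.
-/

open MeasureTheory

section

variable {X : Type*} [MeasurableSpace X] {μ : Measure X} [IsFiniteMeasure μ] {f : X → ℝ}

theorem integrable_abs_of_integrable_sq (hf : Integrable (fun x => f x ^ 2) μ) :
    Integrable (fun x => |f x|) μ := by
  have hmeas : AEStronglyMeasurable (fun x => |f x|) μ := by
    simpa only [Real.sqrt_sq_eq_abs] using
      Real.continuous_sqrt.comp_aestronglyMeasurable hf.aestronglyMeasurable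
  exact ((memLp_two_iff_integrable_sq hmeas).2 (by simpa only [sq_abs] using hf)).integrable
    one_le_two

theorem sq_integral_abs_le_measureReal_mul_integral_sq (hf : Integrable (fun x => f x ^ 2) μ) :
    (∫ x, |f x| ∂μ) ^ 2 ≤ μ.real Set.univ * ∫ x, f x ^ 2 ∂μ := by
  rcases eq_zero_or_neZero μ with rfl | _
  · simp
  have hm : 0 < μ.real Set.univ := by simp
  have jensen := (convexOn_pow 2).map_average_le (continuousOn_pow 2) isClosed_Ici
    (ae_of_all _ fun x => abs_nonneg (f x)) (integrable_abs_of_integrable_sq hf)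
    (by simpa only [Function.comp_def, sq_abs] using hf)
  simp only [average_eq, smul_eq_mul, sq_abs] at jensen
  rwa [mul_pow, inv_pow, sq, mul_inv, mul_assoc, mul_le_mul_iff_right₀ (inv_pos.2 hm),
    inv_mul_le_iff₀ hm] at jensen

theorem sq_div_measureReal_le_integral_sq {c : ℝ} (hc : 0 ≤ c) (hcf : c ≤ ∫ x, |f x| ∂μ)
    (hf : Integrable (fun x => f x ^ 2) μ) :
    c ^ 2 / μ.real Set.univ ≤ ∫ x, f x ^ 2 ∂μ := by
  rcases (measureReal_nonneg (μ := μ) (s := Set.univ)).eq_or_lt with hm | hm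
  · rw [← hm, div_zero]; exact integral_nonneg fun x => sq_nonneg _
  rw [div_le_iff₀' hm]
  exact (pow_le_pow_left₀ hc hcf 2).trans (sq_integral_abs_le_measureReal_mul_integral_sq hf)

end

theorem IntegrableOn.swap_restrict_prod {α β : Type*} [MeasurableSpace α]
    [MeasurableSpace β] {μ : Measure α} {ν : Measure β} [SFinite μ] [SFinite ν] {f : α → β → ℝ}
    {s : Set α} {t : Set β}
    (hf : IntegrableOn (fun p : α × β => f p.1 p.2) (s ×ˢ t) (μ.prod ν)) :
    Integrable (Function.uncurry fun y x => f x y) ((ν.restrict t).prod (μ.restrict s)) := by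
  rw [IntegrableOn, ← Measure.prod_restrict] at hf
  exact hf.swap

/-- The annulus-stretching lemma: lower bound on the pairing ∫∫ (α² - β²). -/
theorem stretching_annulus_lower_bound
    (E E₀ : ℝ) (hE : 0 < E) (hE₀ : 0 < E₀)
    (α β : ℝ → ℝ → ℝ)
    (hαint : IntegrableOn (fun p : ℝ × ℝ => (α p.1 p.2) ^ 2)
      (Set.Ioc 0 E ×ˢ Set.Ioo (0 : ℝ) 1))
    (hβint : IntegrableOn (fun p : ℝ × ℝ => (β p.1 p.2) ^ 2)
      (Set.Ioc 0 E ×ˢ Set.Ioo (0 : ℝ) 1))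
    (htotal : ∫ y in Set.Ioo (0 : ℝ) 1, ∫ x in Set.Ioc 0 E,
        ((α x y) ^ 2 + (β x y) ^ 2) ≤ E₀)
    (htransverse : ∀ y ∈ Set.Ioo (0 : ℝ) 1,
        E₀ ≤ ∫ x in Set.Ioc 0 E, |α x y|) :
    2 * E₀ ^ 2 / E - E₀ ≤
      ∫ y in Set.Ioo (0 : ℝ) 1, ∫ x in Set.Ioc 0 E, ((α x y) ^ 2 - (β x y) ^ 2) := by
  have hα := IntegrableOn.swap_restrict_prod (f := fun x y => α x y ^ 2) hαint
  have hβ := IntegrableOn.swap_restrict_prod (f := fun x y => β x y ^ 2) hβint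
  have hslice : ∀ᵐ y ∂volume.restrict (Set.Ioo (0 : ℝ) 1),
      E₀ ^ 2 / E ≤ ∫ x in Set.Ioc 0 E, α x y ^ 2 := by
    filter_upwards [hα.prod_right_ae, ae_restrict_mem measurableSet_Ioo] with y hy hymem
    simpa only [measureReal_restrict_apply_univ, Real.volume_real_Ioc_of_le hE.le, sub_zero]
      using sq_div_measureReal_le_integral_sq hE₀.le (htransverse y hymem) hy
  have hαlower : E₀ ^ 2 / E ≤ ∫ y in Set.Ioo (0 : ℝ) 1, ∫ x in Set.Ioc 0 E, α x y ^ 2 := by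
    simpa only [Function.uncurry_apply_pair, setIntegral_const,
      Real.volume_real_Ioo_of_le zero_le_one, sub_zero, one_smul]
      using integral_mono_ae (integrable_const _) hα.integral_prod_left hslice
  have hsub := integral_integral_sub hα hβ
  have hadd := integral_integral_add hα hβ
  simp only [Function.uncurry_apply_pair] at hsub hadd
  linarith [mul_div_assoc 2 (E₀ ^ 2) E]
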